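/- First claim of Theorem 4 (attitude error formula and inverse proportionality to the internal force): let w, ū ∈ ℝ³ be unit vectors, L > 0, g > 0, t ≠ 0, ξ ∈ ℝ. If the equilibrium alignment condition w × (ξ·g·e₃ + L·t·ū) = 0 holds, then the load attitude error e_R := ‖w × ū‖² satisfies e_R = (ξ·g/(L·t))²·‖w × e₃‖² = (ξ·g/(L·t))²·(1 − ⟨w, e₃⟩²). In particular, for fixed ξ, g, L and fixed equilibrium inclination ⟨w, e₃⟩, the attitude error is inversely proportional to t². -/

import Mathlib

open scoped RealInnerProductSpace

/-- Cross product on `EuclideanSpace ℝ (Fin 3)`. -/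
noncomputable def cross3 (a b : EuclideanSpace ℝ (Fin 3)) : EuclideanSpace ℝ (Fin 3) :=
  WithLp.toLp 2 ![a 1 * b 2 - a 2 * b 1, a 2 * b 0 - a 0 * b 2, a 0 * b 1 - a 1 * b 0]

/-- The vertical unit vector `e₃`. -/
noncomputable def e3 : EuclideanSpace ℝ (Fin 3) := WithLp.toLp 2 ![0, 0, 1]

/-!
By linearity of `w × ·`, the alignment condition says `L t (w × ū) = -ξ g (w × e₃)`, so
`‖w × ū‖² = (ξ g / (L t))² ‖w × e₃‖²`; Lagrange's identity
`‖w × e₃‖² = ‖w‖² ‖e₃‖² - ⟨w, e₃⟩²` then gives the second form for unit `w`.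
-/

open Matrix

lemma cross3_eq_crossProduct (a b : EuclideanSpace ℝ (Fin 3)) :
    cross3 a b = WithLp.toLp 2 (a.ofLp ⨯₃ b.ofLp) := by
  simp [cross3, cross_apply]

lemma EuclideanSpace.real_inner_eq_dotProduct {ι : Type*} [Fintype ι]
    (a b : EuclideanSpace ℝ ι) : ⟪a, b⟫ = a.ofLp ⬝ᵥ b.ofLp := by
  simp [EuclideanSpace.inner_eq_star_dotProduct, dotProduct_comm]

lemma cross3_add_smul_right (a u v : EuclideanSpace ℝ (Fin 3)) (c d : ℝ) :
    cross3 a (c • u + d • v) = c • cross3 a u + d • cross3 a v := by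
  simp only [cross3_eq_crossProduct, WithLp.ofLp_add, WithLp.ofLp_smul, map_add, map_smul]
  rfl

lemma norm_cross3_sq (a b : EuclideanSpace ℝ (Fin 3)) :
    ‖cross3 a b‖ ^ 2 = ‖a‖ ^ 2 * ‖b‖ ^ 2 - ⟪a, b⟫ ^ 2 := by
  simp only [← real_inner_self_eq_norm_sq, EuclideanSpace.real_inner_eq_dotProduct,
    cross3_eq_crossProduct, cross_dot_cross, dotProduct_comm b.ofLp a.ofLp]
  ring

lemma norm_e3 : ‖e3‖ = 1 := by
  simp [e3, EuclideanSpace.norm_eq, Fin.sum_univ_three]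

lemma norm_cross3_sq_of_cross3_add_smul_eq_zero {w u v : EuclideanSpace ℝ (Fin 3)} {c d : ℝ}
    (hd : d ≠ 0) (h : cross3 w (c • v + d • u) = 0) :
    ‖cross3 w u‖ ^ 2 = (c / d) ^ 2 * ‖cross3 w v‖ ^ 2 := by
  have hu : cross3 w u = -(c / d) • cross3 w v := by
    rw [cross3_add_smul_right] at h
    linear_combination (norm := match_scalars <;> field_simp <;> ring) d⁻¹ • h
  rw [hu, norm_smul, mul_pow, Real.norm_eq_abs, sq_abs, neg_sq]

theorem attitude_error_formula_general
    (g ξ L t : ℝ) (hL : 0 < L) (ht : t ≠ 0)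
    (w ubar : EuclideanSpace ℝ (Fin 3)) (hw : ‖w‖ = 1)
    (halign : cross3 w ((ξ * g) • e3 + (L * t) • ubar) = 0) :
    ‖cross3 w ubar‖ ^ 2 = (ξ * g / (L * t)) ^ 2 * ‖cross3 w e3‖ ^ 2 ∧
    ‖cross3 w ubar‖ ^ 2 = (ξ * g / (L * t)) ^ 2 * (1 - ⟪w, e3⟫ ^ 2) := by
  have hfirst := norm_cross3_sq_of_cross3_add_smul_eq_zero (mul_ne_zero hL.ne' ht) halign
  refine ⟨hfirst, ?_⟩
  rw [hfirst, norm_cross3_sq, hw, norm_e3]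
  ring

/-- first claim of Theorem 4: if the equilibrium alignment condition
`w × (ξ g e₃ + L t ū) = 0` holds, then the attitude error `e_R = ‖w × ū‖²` equals
`(ξ g/(L t))² ‖w × e₃‖² = (ξ g/(L t))² (1 − ⟨w, e₃⟩²)`; in particular it is inversely
proportional to `t²`. -/
theorem attitude_error_formula
    (g ξ L t : ℝ) (hg : 0 < g) (hL : 0 < L) (ht : t ≠ 0)
    (w ubar : EuclideanSpace ℝ (Fin 3)) (hw : ‖w‖ = 1) (hubar : ‖ubar‖ = 1)
    (halign : cross3 w ((ξ * g) • e3 + (L * t) • ubar) = 0) :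
    ‖cross3 w ubar‖ ^ 2 = (ξ * g / (L * t)) ^ 2 * ‖cross3 w e3‖ ^ 2 ∧
    ‖cross3 w ubar‖ ^ 2 = (ξ * g / (L * t)) ^ 2 * (1 - ⟪w, e3⟫ ^ 2) :=
  attitude_error_formula_general g ξ L t hL ht w ubar hw halign
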